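/- With x_k(t) as the solution of the branching ODE system, the generating function ψ(u,t) = Σ_{k=0}^{n} u^{n−k} x_k(t) equals (2 + (u−2)e^{−βt/n})^n for all real u and t ≥ 0. -/

import Mathlib

/-!
The system is triangular and linear, so each `x k` is the unique solution of a scalar linear ODE
driven by `x (k - 1)`. The solution is `x k t = C(n,k) (2 (1 - q))^k q^(n-k)` with
`q = exp (-β t / n)` (note `exp (-λ_k t) = q^(n-k)`); it matches the forcing term because
`C(n,k+1) (k+1) = C(n,k) (n-k)`. Then `ψ(u,t)` is the binomial expansion of `(2 (1 - q) + u q)^n`.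
-/

noncomputable def lam (n : ℕ) (β : ℝ) (k : ℕ) : ℝ := β * ((n : ℝ) - k) / n

open Real

theorem eq_of_hasDerivAt_sub_mul {c : ℝ} {F f g : ℝ → ℝ}
    (hf : ∀ t, HasDerivAt f (F t - c * f t) t) (hg : ∀ t, HasDerivAt g (F t - c * g t) t)
    (h0 : f 0 = g 0) : f = g :=
  ODE_solution_unique_univ (v := fun t y => F t - c * y) (s := fun _ => Set.univ) (t₀ := 0)
    (fun t => ((LipschitzWith.const (F t)).sub (lipschitzWith_smul c)).lipschitzOnWith)
    (fun t => ⟨hf t, trivial⟩) (fun t => ⟨hg t, trivial⟩) h0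

lemma lam_eq_lam_succ_add (n : ℕ) (β : ℝ) (k : ℕ) : lam n β k = lam n β (k + 1) + β / n := by
  unfold lam; push_cast; ring

lemma exp_neg_lam_mul (n : ℕ) (β : ℝ) {k : ℕ} (hk : k ≤ n) (t : ℝ) :
    exp (-lam n β k * t) = exp (-β * t / n) ^ (n - k) := by
  rw [← exp_nat_mul, Nat.cast_sub hk]
  unfold lam
  ring_nf

noncomputable def branchingSol (n : ℕ) (β : ℝ) (k : ℕ) (t : ℝ) : ℝ :=
  n.choose k * (2 * (1 - exp (-β * t / n))) ^ k * exp (-lam n β k * t)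

lemma hasDerivAt_branchingSol (n : ℕ) (β : ℝ) (k : ℕ) (t : ℝ) :
    HasDerivAt (branchingSol n β k)
      (n.choose k * k * (2 * (1 - exp (-β * t / n))) ^ (k - 1) * (2 * β / n)
          * exp (-β * t / n) * exp (-lam n β k * t) - lam n β k * branchingSol n β k t) t := by
  have hq :
      HasDerivAt (fun t => 2 * (1 - exp (-β * t / n))) (2 * (β / n * exp (-β * t / n))) t := by
    refine (((hasDerivAt_id t).const_mul (-β)).div_const (n : ℝ)).exp.const_sub 1 |>.const_mul 2
      |>.congr_deriv ?_
    simp only [id]; ring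
  have hE : HasDerivAt (fun t => exp (-lam n β k * t)) (exp (-lam n β k * t) * -lam n β k) t := by
    simpa using ((hasDerivAt_id t).const_mul (-lam n β k)).exp
  refine (((hq.pow k).const_mul (n.choose k : ℝ)).mul hE).congr_deriv ?_
  simp only [branchingSol, Pi.pow_apply]
  ring

lemma hasDerivAt_branchingSol_zero (n : ℕ) (β t : ℝ) :
    HasDerivAt (branchingSol n β 0) (-lam n β 0 * branchingSol n β 0 t) t :=
  (hasDerivAt_branchingSol n β 0 t).congr_deriv (by simp)

lemma hasDerivAt_branchingSol_succ (n : ℕ) (β : ℝ) {k : ℕ} (hk : k + 1 ≤ n) (t : ℝ) :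
    HasDerivAt (branchingSol n β (k + 1))
      (2 * lam n β k * branchingSol n β k t - lam n β (k + 1) * branchingSol n β (k + 1) t) t := by
  refine (hasDerivAt_branchingSol n β (k + 1) t).congr_deriv ?_
  have hchoose : (n.choose (k + 1) * (k + 1 : ℕ) : ℝ) = n.choose k * ((n : ℝ) - k) := by
    rw [← Nat.cast_sub (by omega : k ≤ n)]
    exact_mod_cast Nat.choose_succ_right_eq n k
  have hexp : exp (-lam n β k * t) = exp (-β * t / n) * exp (-lam n β (k + 1) * t) := by
    rw [← exp_add, lam_eq_lam_succ_add]
    ring_nf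
  simp only [branchingSol, Nat.add_sub_cancel, hexp]
  unfold lam
  push_cast at hchoose ⊢
  linear_combination (2 * (1 - exp (-β * t / n))) ^ k * (2 * β / n) * exp (-β * t / n)
    * exp (-(β * (n - (k + 1)) / n) * t) * hchoose

lemma sum_pow_mul_branchingSol (n : ℕ) (β u t : ℝ) :
    ∑ k ∈ Finset.range (n + 1), u ^ (n - k) * branchingSol n β k t
      = (2 + (u - 2) * exp (-β * t / n)) ^ n := by
  calc ∑ k ∈ Finset.range (n + 1), u ^ (n - k) * branchingSol n β k t
      = ∑ k ∈ Finset.range (n + 1),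
          (2 * (1 - exp (-β * t / n))) ^ k * (u * exp (-β * t / n)) ^ (n - k) * n.choose k := by
        refine Finset.sum_congr rfl fun k hk => ?_
        rw [branchingSol, exp_neg_lam_mul n β (Finset.mem_range_succ_iff.mp hk), mul_pow]
        ring
    _ = (2 + (u - 2) * exp (-β * t / n)) ^ n := by
        rw [← add_pow]
        ring

theorem generating_function_general (n : ℕ) (β : ℝ)
    (x : ℕ → ℝ → ℝ)
    (hderiv0 : ∀ t : ℝ, HasDerivAt (x 0) (-(lam n β 0) * x 0 t) t)
    (hinit0 : x 0 0 = 1)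
    (hderiv : ∀ k, 1 ≤ k → k ≤ n → ∀ t : ℝ,
      HasDerivAt (x k) (2 * lam n β (k - 1) * x (k - 1) t - lam n β k * x k t) t)
    (hinit : ∀ k, 1 ≤ k → k ≤ n → x k 0 = 0) :
    ∀ (u : ℝ) (t : ℝ), 0 ≤ t →
      ∑ k ∈ Finset.range (n + 1), u ^ (n - k) * x k t
        = (2 + (u - 2) * Real.exp (-β * t / n)) ^ n := by
  have hx : ∀ k ≤ n, x k = branchingSol n β k := by
    intro k hk
    induction k with
    | zero =>
      exact eq_of_hasDerivAt_sub_mul (c := lam n β 0) (F := 0)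
        (fun t => (hderiv0 t).congr_deriv (by simp))
        (fun t => (hasDerivAt_branchingSol_zero n β t).congr_deriv (by simp))
        (by simp [hinit0, branchingSol])
    | succ k ih =>
      refine eq_of_hasDerivAt_sub_mul (F := fun t => 2 * lam n β k * branchingSol n β k t)
        (fun t => ?_) (hasDerivAt_branchingSol_succ n β hk) ?_
      · simpa [ih (by omega)] using hderiv (k + 1) (by omega) hk t
      · simp [hinit (k + 1) (by omega) hk, branchingSol]
  intro u t _
  rw [← sum_pow_mul_branchingSol n β u t]
  exact Finset.sum_congr rfl fun k hk => by rw [hx k (Finset.mem_range_succ_iff.mp hk)]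

/-- The generating function ψ(u,t) = Σ u^{n−k} x_k(t) equals (2 + (u−2)e^{−βt/n})^n. -/
theorem generating_function (n : ℕ) (hn : 1 ≤ n) (β : ℝ) (hβ : 0 < β)
    (x : ℕ → ℝ → ℝ)
    (hderiv0 : ∀ t : ℝ, HasDerivAt (x 0) (-(lam n β 0) * x 0 t) t)
    (hinit0 : x 0 0 = 1)
    (hderiv : ∀ k, 1 ≤ k → k ≤ n → ∀ t : ℝ,
      HasDerivAt (x k) (2 * lam n β (k - 1) * x (k - 1) t - lam n β k * x k t) t)
    (hinit : ∀ k, 1 ≤ k → k ≤ n → x k 0 = 0) :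
    ∀ (u : ℝ) (t : ℝ), 0 ≤ t →
      ∑ k ∈ Finset.range (n + 1), u ^ (n - k) * x k t
        = (2 + (u - 2) * Real.exp (-β * t / n)) ^ n :=
  generating_function_general n β x hderiv0 hinit0 hderiv hinit
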